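/- Let M be a positive integer and let w : ℝ^d → ℝ be a measurable, ℤ^d-periodic, locally square-integrable function. Define w̃(x) = M^{−d} Σ_{k ∈ {0,…,M−1}^d} w(x + k/M), which is (1/M)ℤ^d-periodic. Then for every r > 0 and every ξ ∈ ℝ^d: ∬_{{(x,y) ∈ ([0,1/M)^d ∩ (E/M)) × (E/M) : |x−y| < r}} ( w̃(x) − w̃(y) + ξ·(x−y) )² dx dy ≤ M^{−d} ∬_{{(x,y) ∈ ([0,1)^d ∩ (E/M)) × (E/M) : |x−y| < r}} ( w(x) − w(y) + ξ·(x−y) )² dx dy. -/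

import Mathlib

open MeasureTheory Filter Metric Set Pointwise
open scoped Topology ENNReal NNReal

noncomputable section

/-- The lattice point of `ℤ^d` inside `ℝ^d`. -/
def lat (d : ℕ) (k : Fin d → ℤ) : EuclideanSpace ℝ (Fin d) := WithLp.toLp 2 (fun i => (k i : ℝ))

/-- The periodic set `E = ⋃_{k ∈ ℤ^d} (k + K)`. -/
def latSet (d : ℕ) (K : Set (EuclideanSpace ℝ (Fin d))) : Set (EuclideanSpace ℝ (Fin d)) :=
  ⋃ k : Fin d → ℤ, (lat d k +ᵥ K)

/-- `K` is compact, the closure of a bounded connected open set, with negligible boundary,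
whose integer translates are pairwise disjoint. -/
def IsAdmissibleK (d : ℕ) (K : Set (EuclideanSpace ℝ (Fin d))) : Prop :=
  (∃ U : Set (EuclideanSpace ℝ (Fin d)),
      IsOpen U ∧ IsConnected U ∧ Bornology.IsBounded U ∧ K = closure U) ∧
  MeasureTheory.volume (frontier K) = 0 ∧
  ∀ k : Fin d → ℤ, k ≠ 0 → Disjoint (lat d k +ᵥ K) K

/-- `φ` is a radial kernel with nonincreasing nonnegative profile `φ₀` and finite
second moment. -/
def IsKernel (d : ℕ) (φ : EuclideanSpace ℝ (Fin d) → ℝ) (φ₀ : ℝ → ℝ) : Prop :=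
  (∀ t, 0 ≤ φ₀ t) ∧ AntitoneOn φ₀ (Set.Ici 0) ∧ (∀ ξ, φ ξ = φ₀ ‖ξ‖) ∧
  MeasureTheory.Integrable (fun ξ : EuclideanSpace ℝ (Fin d) => φ ξ * (1 + ‖ξ‖ ^ 2))

/-- The nonlocal functional `F^φ_{δ,ε}`. -/
def Fphi (d : ℕ) (φ : EuclideanSpace ℝ (Fin d) → ℝ) (Ω K : Set (EuclideanSpace ℝ (Fin d)))
    (δ ε : ℝ) (u : EuclideanSpace ℝ (Fin d) → ℝ) : ℝ :=
  (ε ^ (d + 2))⁻¹ * ∫ x in Ω ∩ δ • latSet d K, ∫ y in Ω ∩ δ • latSet d K,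
    φ (ε⁻¹ • (x - y)) * (u x - u y) ^ 2

/-- The nonlocal functional `F_{δ,ε}` with the truncation kernel `χ_{B₁}`. -/
def Fball (d : ℕ) (Ω K : Set (EuclideanSpace ℝ (Fin d))) (δ ε : ℝ)
    (u : EuclideanSpace ℝ (Fin d) → ℝ) : ℝ :=
  (ε ^ (d + 2))⁻¹ *
    ∫ p in ((Ω ∩ δ • latSet d K) ×ˢ (Ω ∩ δ • latSet d K)) ∩
      {p : EuclideanSpace ℝ (Fin d) × EuclideanSpace ℝ (Fin d) | dist p.1 p.2 < ε},
      (u p.1 - u p.2) ^ 2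

/-- The half-open cube `[0,s)^d`. -/
def cubeS (d : ℕ) (s : ℝ) : Set (EuclideanSpace ℝ (Fin d)) :=
  {x | ∀ i, 0 ≤ x i ∧ x i < s}

/-!
The average `w̃` is a convex combination of the translates `w (· + k/M)`, `k ∈ {0,…,M-1}^d`, and
the linear term `ξ·(x-y)` does not change when `x` and `y` are translated together, so pointwise
`(w̃(x) - w̃(y) + ξ·(x-y))² ≤ M^{-d} ∑ₖ (w(x+k/M) - w(y+k/M) + ξ·(x-y))²`. Integrating over the
pairs with `x ∈ [0,1/M)^d` and translating both variables by `k/M`, the `k`-th term becomes the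
integral over the pairs with `x` in the cell `k/M + [0,1/M)^d`. These translations preserve `E/M`
and the cells tile `[0,1)^d`, so the sum of the `M^d` terms is the integral over `x ∈ [0,1)^d`.
-/

open Function

section TranslationAverage

variable {X : Type*} [AddGroup X] [MeasurableSpace X] [MeasurableAdd X]
  {μ : Measure X} [μ.IsAddLeftInvariant]

theorem setIntegral_comp_add_left (c : X) (g : X → ℝ) (A : Set X) :
    ∫ x in A, g (c + x) ∂μ = ∫ x in c +ᵥ A, g x ∂μ := by
  rw [← image_vadd]
  exact ((measurePreserving_add_left μ c).setIntegral_image_emb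
    (MeasurableEquiv.addLeft c).measurableEmbedding g A).symm

theorem integrableOn_comp_add_left_iff (c : X) {g : X → ℝ} {A : Set X} :
    IntegrableOn (fun x => g (c + x)) A μ ↔ IntegrableOn g (c +ᵥ A) μ := by
  rw [← image_vadd]
  exact ((measurePreserving_add_left μ c).integrableOn_image
    (MeasurableEquiv.addLeft c).measurableEmbedding).symm

theorem setIntegral_sq_average_translates_le {ι : Type*} [Fintype ι] (c : ι → X) {A : Set X}
    (hA : MeasurableSet A) (hdisj : Pairwise (Disjoint on fun i => c i +ᵥ A)) {g : X → ℝ}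
    (hint : IntegrableOn (fun x => g x ^ 2) (⋃ i, c i +ᵥ A) μ) :
    ∫ x in A, ((Fintype.card ι : ℝ)⁻¹ * ∑ i, g (c i + x)) ^ 2 ∂μ ≤
      (Fintype.card ι : ℝ)⁻¹ * ∫ x in ⋃ i, c i +ᵥ A, g x ^ 2 ∂μ := by
  have hpiece : ∀ i, IntegrableOn (fun x => g (c i + x) ^ 2) A μ := fun i =>
    (integrableOn_comp_add_left_iff (c i)).2 (hint.mono_set (subset_iUnion (c · +ᵥ A) i))
  have hjensen : ∀ x, ((Fintype.card ι : ℝ)⁻¹ * ∑ i, g (c i + x)) ^ 2 ≤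
      (Fintype.card ι : ℝ)⁻¹ * ∑ i, g (c i + x) ^ 2 := fun x => by
    simpa only [inv_mul_eq_div, Finset.card_univ] using
      sum_div_card_sq_le_sum_sq_div_card (s := Finset.univ) (f := fun i => g (c i + x))
  calc ∫ x in A, ((Fintype.card ι : ℝ)⁻¹ * ∑ i, g (c i + x)) ^ 2 ∂μ
      ≤ ∫ x in A, (Fintype.card ι : ℝ)⁻¹ * ∑ i, g (c i + x) ^ 2 ∂μ :=
        integral_mono_of_nonneg (.of_forall fun _ => sq_nonneg _)
          ((integrable_finsetSum _ fun i _ => hpiece i).const_mul _) (.of_forall hjensen)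
    _ = (Fintype.card ι : ℝ)⁻¹ * ∑ i, ∫ x in c i +ᵥ A, g x ^ 2 ∂μ := by
        rw [integral_const_mul, integral_finsetSum _ fun i _ => hpiece i]
        simp_rw [setIntegral_comp_add_left (μ := μ) _ (fun x => g x ^ 2)]
    _ = (Fintype.card ι : ℝ)⁻¹ * ∫ x in ⋃ i, c i +ᵥ A, g x ^ 2 ∂μ := by
        rw [integral_iUnion_fintype (fun i => hA.const_vadd _) hdisj
          fun i => hint.mono_set (subset_iUnion (c · +ᵥ A) i)]

end TranslationAverage

section TiltedIncrement

variable {V : Type*} [NormedAddCommGroup V] [InnerProductSpace ℝ V]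

def tiltedIncrement (w : V → ℝ) (ξ : V) (p : V × V) : ℝ :=
  w p.1 - w p.2 + inner ℝ ξ (p.1 - p.2)

theorem tiltedIncrement_eq_average {ι : Type*} [Fintype ι] [Nonempty ι] {w wt : V → ℝ}
    {c : ι → V} (hwt : ∀ x, wt x = (Fintype.card ι : ℝ)⁻¹ * ∑ i, w (x + c i)) (ξ : V)
    (p : V × V) :
    tiltedIncrement wt ξ p =
      (Fintype.card ι : ℝ)⁻¹ * ∑ i, tiltedIncrement w ξ ((c i, c i) + p) := by
  simp only [tiltedIncrement, hwt, Prod.fst_add, Prod.snd_add, add_comm (c _),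
    add_sub_add_right_eq_sub, Finset.sum_add_distrib, Finset.sum_sub_distrib, Finset.sum_const,
    Finset.card_univ, nsmul_eq_mul]
  field_simp

theorem integrableOn_sq_tiltedIncrement [MeasurableSpace V] [OpensMeasurableSpace V]
    {μ : Measure V} [SFinite μ] [IsFiniteMeasureOnCompacts μ] {w : V → ℝ} (hw : Measurable w)
    {C : Set V} (hC : IsCompact C) (hloc : IntegrableOn (fun x => w x ^ 2) C μ) (ξ : V) :
    IntegrableOn (fun p => tiltedIncrement w ξ p ^ 2) (C ×ˢ C) (μ.prod μ) := by
  have : IsFiniteMeasure (μ.restrict C) := isFiniteMeasure_restrict.2 hC.measure_lt_top.ne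
  have hw2 : MemLp w 2 (μ.restrict C) :=
    (memLp_two_iff_integrable_sq hw.aestronglyMeasurable).2 hloc
  have hξ2 : MemLp (fun x => inner ℝ ξ x) 2 (μ.restrict C) :=
    (memLp_two_iff_integrable_sq (continuous_const.inner continuous_id).aestronglyMeasurable).2
      (ContinuousOn.integrableOn_compact hC (by fun_prop))
  have hsum :=
    ((hw2.comp_fst _).sub (hw2.comp_snd _)).add ((hξ2.comp_fst _).sub (hξ2.comp_snd _))
  rw [IntegrableOn, ← Measure.prod_restrict]
  simpa only [tiltedIncrement, inner_sub_right, Pi.add_apply, Pi.sub_apply] using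
    hsum.integrable_sq

end TiltedIncrement

section NearPairs

variable {V : Type*} [PseudoMetricSpace V]

def nearPairs (Q S : Set V) (r : ℝ) : Set (V × V) :=
  ((Q ∩ S) ×ˢ S) ∩ {p | dist p.1 p.2 < r}

theorem nearPairs_iUnion {ι : Type*} (Q : ι → Set V) (S : Set V) (r : ℝ) :
    nearPairs (⋃ i, Q i) S r = ⋃ i, nearPairs (Q i) S r := by
  simp only [nearPairs, iUnion_inter, iUnion_prod_const]

theorem vadd_nearPairs {G : Type*} [SeminormedAddCommGroup G] (c : G) (Q S : Set G) (r : ℝ) :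
    (c, c) +ᵥ nearPairs Q S r = nearPairs (c +ᵥ Q) (c +ᵥ S) r := by
  ext ⟨x, y⟩
  simp only [nearPairs, mem_vadd_set_iff_neg_vadd_mem, mem_inter_iff, mem_prod, mem_ofPred_eq,
    Prod.neg_mk, vadd_eq_add, Prod.mk_add_mk, dist_add_left]

theorem Disjoint.nearPairs {Q Q' : Set V} (h : Disjoint Q Q') (S : Set V) (r : ℝ) :
    Disjoint (nearPairs Q S r) (nearPairs Q' S r) :=
  (h.mono inter_subset_left inter_subset_left).set_prod_left _ _ |>.mono inter_subset_left
    inter_subset_left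

theorem nearPairs_subset_cthickening (Q S : Set V) (r : ℝ) :
    nearPairs Q S r ⊆ cthickening r Q ×ˢ cthickening r Q := by
  rintro ⟨x, y⟩ ⟨⟨⟨hx, -⟩, -⟩, hxy⟩
  exact ⟨self_subset_cthickening Q hx,
    mem_cthickening_of_dist_le y x r Q hx (dist_comm x y ▸ hxy.le)⟩

theorem MeasurableSet.nearPairs [MeasurableSpace V] [OpensMeasurableSpace V]
    [SecondCountableTopology V] {Q S : Set V} (hQ : MeasurableSet Q) (hS : MeasurableSet S)
    (r : ℝ) : MeasurableSet (nearPairs Q S r) :=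
  ((hQ.inter hS).prod hS).inter (measurableSet_lt (measurable_fst.dist measurable_snd)
    measurable_const)

end NearPairs

section Grid

variable {d : ℕ}

theorem lat_add (k j : Fin d → ℤ) : lat d (k + j) = lat d k + lat d j := by
  ext i
  simp [lat]

theorem lat_vadd_latSet (K : Set (EuclideanSpace ℝ (Fin d))) (k : Fin d → ℤ) :
    lat d k +ᵥ latSet d K = latSet d K := by
  simp only [latSet, vadd_set_iUnion, vadd_vadd, ← lat_add]
  exact (Equiv.addLeft k).iSup_congr fun _ => rfl

theorem measurableSet_latSet {K : Set (EuclideanSpace ℝ (Fin d))} (hK : MeasurableSet K) :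
    MeasurableSet (latSet d K) :=
  .iUnion fun _ => hK.const_vadd _

def gridPoint {M : ℕ} (k : Fin d → Fin M) : EuclideanSpace ℝ (Fin d) :=
  (M : ℝ)⁻¹ • lat d (fun i => (k i : ℤ))

theorem gridPoint_apply {M : ℕ} (k : Fin d → Fin M) (i : Fin d) :
    gridPoint k i = (k i : ℝ) / M := by
  simp [gridPoint, lat, div_eq_inv_mul]

theorem gridPoint_vadd_smul_latSet {M : ℕ} (k : Fin d → Fin M)
    (K : Set (EuclideanSpace ℝ (Fin d))) :
    gridPoint k +ᵥ (M : ℝ)⁻¹ • latSet d K = (M : ℝ)⁻¹ • latSet d K := by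
  calc gridPoint k +ᵥ (M : ℝ)⁻¹ • latSet d K
      = (M : ℝ)⁻¹ • (lat d (fun i => (k i : ℤ)) +ᵥ latSet d K) := by
        simp only [gridPoint, ← image_vadd, ← image_smul, image_image, vadd_eq_add, smul_add]
    _ = (M : ℝ)⁻¹ • latSet d K := by rw [lat_vadd_latSet]

theorem mem_gridPoint_vadd_cubeS {M : ℕ} (hM : 0 < M) (k : Fin d → Fin M)
    (x : EuclideanSpace ℝ (Fin d)) :
    x ∈ gridPoint k +ᵥ cubeS d (M : ℝ)⁻¹ ↔ ∀ i, 0 ≤ x i ∧ ⌊(M : ℝ) * x i⌋₊ = k i := by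
  have hM' : (0 : ℝ) < M := Nat.cast_pos.2 hM
  rw [mem_vadd_set_iff_neg_vadd_mem]
  refine forall_congr' fun i => ?_
  rw [vadd_eq_add, PiLp.add_apply, PiLp.neg_apply, gridPoint_apply,
    show -((k i : ℝ) / M) + x i = (M * x i - k i) / M by field_simp; ring,
    le_div_iff₀ hM', zero_mul, inv_eq_one_div, div_lt_div_iff_of_pos_right hM']
  constructor
  · rintro ⟨h1, h2⟩
    have hMx : 0 ≤ (M : ℝ) * x i := by linarith [(k i : ℕ).cast_nonneg (α := ℝ)]
    exact ⟨(mul_nonneg_iff_of_pos_left hM').1 hMx,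
      (Nat.floor_eq_iff hMx).2 ⟨by linarith, by linarith⟩⟩
  · rintro ⟨hx, hfl⟩
    obtain ⟨h1, h2⟩ := (Nat.floor_eq_iff (by positivity)).1 hfl
    exact ⟨by linarith, by linarith⟩

theorem cubeS_one_eq_iUnion {M : ℕ} (hM : 0 < M) :
    cubeS d 1 = ⋃ k : Fin d → Fin M, gridPoint k +ᵥ cubeS d (M : ℝ)⁻¹ := by
  have hM' : (0 : ℝ) < M := Nat.cast_pos.2 hM
  ext x
  simp only [mem_iUnion, mem_gridPoint_vadd_cubeS hM]
  constructor
  · intro hx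
    have hMx : ∀ i, 0 ≤ (M : ℝ) * x i := fun i => mul_nonneg hM'.le (hx i).1
    refine ⟨fun i => ⟨⌊(M : ℝ) * x i⌋₊, (Nat.floor_lt (hMx i)).2 ?_⟩,
      fun i => ⟨(hx i).1, rfl⟩⟩
    simpa using mul_lt_mul_of_pos_left (hx i).2 hM'
  · rintro ⟨k, hk⟩ i
    have hlt := (Nat.floor_lt (mul_nonneg hM'.le (hk i).1)).1 ((hk i).2.trans_lt (k i).isLt)
    exact ⟨(hk i).1, by simpa using (mul_lt_iff_lt_one_right hM').1 (by simpa using hlt)⟩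

theorem pairwise_disjoint_gridPoint_vadd_cubeS {M : ℕ} (hM : 0 < M) :
    Pairwise (Disjoint on fun k : Fin d → Fin M => gridPoint k +ᵥ cubeS d (M : ℝ)⁻¹) := by
  intro k l hkl
  refine disjoint_left.2 fun x hk hl => hkl (funext fun i => Fin.ext ?_)
  rw [mem_gridPoint_vadd_cubeS hM] at hk hl
  exact Nat.cast_injective ((hk i).2.symm.trans (hl i).2)

theorem measurableSet_cubeS (s : ℝ) : MeasurableSet (cubeS d s) := by
  have hcoord : ∀ i, Measurable fun x : EuclideanSpace ℝ (Fin d) => x i := fun i => by fun_prop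
  simp only [cubeS, ofPred_forall, ofPred_and]
  exact .iInter fun i =>
    (measurableSet_le measurable_const (hcoord i)).inter
      (measurableSet_lt (hcoord i) measurable_const)

theorem isBounded_cubeS_one : Bornology.IsBounded (cubeS d 1) := by
  refine isBounded_iff_forall_norm_le.2 ⟨√d, fun x hx => ?_⟩
  rw [EuclideanSpace.norm_eq]
  gcongr
  calc ∑ i, ‖x i‖ ^ 2 ≤ ∑ _i : Fin d, (1 : ℝ) :=
        Finset.sum_le_sum fun i _ => by rw [Real.norm_eq_abs, sq_abs]; nlinarith [hx i]
    _ = d := by simp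

end Grid

theorem stmt_12_general (d : ℕ)
    (K : Set (EuclideanSpace ℝ (Fin d))) (hK : IsAdmissibleK d K)
    (M : ℕ) (hM : 0 < M)
    (w : EuclideanSpace ℝ (Fin d) → ℝ) (hwm : Measurable w)
    (hloc : ∀ C : Set (EuclideanSpace ℝ (Fin d)), IsCompact C →
      IntegrableOn (fun x => (w x) ^ 2) C)
    (wt : EuclideanSpace ℝ (Fin d) → ℝ)
    (hwt : ∀ x, wt x = (M : ℝ) ^ (-(d:ℤ)) *
      ∑ k : Fin d → Fin M, w (x + (M : ℝ)⁻¹ • lat d (fun i => (k i : ℤ)))) :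
    ∀ r > (0:ℝ), ∀ ξ : EuclideanSpace ℝ (Fin d),
      (∫ p in ((cubeS d ((M:ℝ)⁻¹) ∩ (M:ℝ)⁻¹ • latSet d K) ×ˢ ((M:ℝ)⁻¹ • latSet d K)) ∩
          {p : EuclideanSpace ℝ (Fin d) × EuclideanSpace ℝ (Fin d) | dist p.1 p.2 < r},
          (wt p.1 - wt p.2 + (inner ℝ ξ (p.1 - p.2) : ℝ)) ^ 2)
      ≤ (M : ℝ) ^ (-(d:ℤ)) *
        ∫ p in ((cubeS d 1 ∩ (M:ℝ)⁻¹ • latSet d K) ×ˢ ((M:ℝ)⁻¹ • latSet d K)) ∩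
          {p : EuclideanSpace ℝ (Fin d) × EuclideanSpace ℝ (Fin d) | dist p.1 p.2 < r},
          (w p.1 - w p.2 + (inner ℝ ξ (p.1 - p.2) : ℝ)) ^ 2 := by
  intro r _ ξ
  have : Nonempty (Fin M) := ⟨⟨0, hM⟩⟩
  set S := (M : ℝ)⁻¹ • latSet d K
  have hS : MeasurableSet S := by
    obtain ⟨⟨U, -, -, -, rfl⟩, -⟩ := hK
    exact (measurableSet_latSet isClosed_closure.measurableSet).const_smul₀ _
  have hcard : (M : ℝ) ^ (-(d : ℤ)) = (Fintype.card (Fin d → Fin M) : ℝ)⁻¹ := by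
    simp [zpow_neg]
  have hwt' : ∀ x, wt x = (Fintype.card (Fin d → Fin M) : ℝ)⁻¹ * ∑ k, w (x + gridPoint k) :=
    fun x => by rw [hwt x, hcard]; rfl
  have hcell : ∀ k : Fin d → Fin M,
      (gridPoint k, gridPoint k) +ᵥ nearPairs (cubeS d (M : ℝ)⁻¹) S r =
        nearPairs (gridPoint k +ᵥ cubeS d (M : ℝ)⁻¹) S r := fun k => by
    rw [vadd_nearPairs, gridPoint_vadd_smul_latSet]
  have htile : ⋃ k : Fin d → Fin M,
      (gridPoint k, gridPoint k) +ᵥ nearPairs (cubeS d (M : ℝ)⁻¹) S r =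
        nearPairs (cubeS d 1) S r := by
    simp only [hcell, ← nearPairs_iUnion, ← cubeS_one_eq_iUnion hM]
  have hint : IntegrableOn (fun p => tiltedIncrement w ξ p ^ 2) (nearPairs (cubeS d 1) S r)
      (volume.prod volume) := by
    have hC : IsCompact (cthickening r (cubeS d 1)) :=
      isCompact_of_isClosed_isBounded isClosed_cthickening isBounded_cubeS_one.cthickening
    exact (integrableOn_sq_tiltedIncrement hwm hC (hloc _ hC) ξ).mono_set
      (nearPairs_subset_cthickening _ _ _)
  have key := setIntegral_sq_average_translates_le (fun k => (gridPoint k, gridPoint k))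
    ((measurableSet_cubeS _).nearPairs hS r)
    (fun k l hkl => by
      simpa only [onFun, hcell] using (pairwise_disjoint_gridPoint_vadd_cubeS hM hkl).nearPairs S r)
    (htile ▸ hint)
  simp only [htile, ← tiltedIncrement_eq_average hwt'] at key
  rwa [← hcard] at key

/-- convexity (averaging) estimate for periodized test functions. -/
theorem stmt_12 (d : ℕ) (hd : 1 ≤ d)
    (K : Set (EuclideanSpace ℝ (Fin d))) (hK : IsAdmissibleK d K)
    (M : ℕ) (hM : 0 < M)
    (w : EuclideanSpace ℝ (Fin d) → ℝ) (hwm : Measurable w)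
    (hper : ∀ x : EuclideanSpace ℝ (Fin d), ∀ k : Fin d → ℤ, w (x + lat d k) = w x)
    (hloc : ∀ C : Set (EuclideanSpace ℝ (Fin d)), IsCompact C →
      IntegrableOn (fun x => (w x) ^ 2) C)
    (wt : EuclideanSpace ℝ (Fin d) → ℝ)
    (hwt : ∀ x, wt x = (M : ℝ) ^ (-(d:ℤ)) *
      ∑ k : Fin d → Fin M, w (x + (M : ℝ)⁻¹ • lat d (fun i => (k i : ℤ)))) :
    ∀ r > (0:ℝ), ∀ ξ : EuclideanSpace ℝ (Fin d),
      (∫ p in ((cubeS d ((M:ℝ)⁻¹) ∩ (M:ℝ)⁻¹ • latSet d K) ×ˢ ((M:ℝ)⁻¹ • latSet d K)) ∩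
          {p : EuclideanSpace ℝ (Fin d) × EuclideanSpace ℝ (Fin d) | dist p.1 p.2 < r},
          (wt p.1 - wt p.2 + (inner ℝ ξ (p.1 - p.2) : ℝ)) ^ 2)
      ≤ (M : ℝ) ^ (-(d:ℤ)) *
        ∫ p in ((cubeS d 1 ∩ (M:ℝ)⁻¹ • latSet d K) ×ˢ ((M:ℝ)⁻¹ • latSet d K)) ∩
          {p : EuclideanSpace ℝ (Fin d) × EuclideanSpace ℝ (Fin d) | dist p.1 p.2 < r},
          (w p.1 - w p.2 + (inner ℝ ξ (p.1 - p.2) : ℝ)) ^ 2 :=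
  stmt_12_general d K hK M hM w hwm hloc wt hwt
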